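/- arXiv:2104.13510 — 4 statements merged into one kernel-verified Lean document; each statement's English description precedes it below -/
import Mathlib

section
/- Let Ω be a nonempty convex subset of a topological vector space X, and let x̄ ∈ Ω. Then x̄ ∈ iri(Ω) if and only if x̄ is a relatively absorbing point of Ω, i.e., for every x ∈ Ω with x ≠ x̄ there exists u ∈ Ω such that x̄ lies in the open segment (x, u). -/
/-!
For convex `Ω ∋ x̄`, `cone(Ω - x̄)` is a convex cone containing `0`, so it is a linear subspace
exactly when it contains `x̄ - x` for every `x ∈ Ω`. For `x ≠ x̄` this means
`x̄ - x = t • (u - x̄)` with `t > 0` and `u ∈ Ω`, which says precisely that `x̄ ∈ (x, u)`.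
-/

open Set Pointwise Filter Topology

/-- The cone generated by a set `A`: `{t • a | t ≥ 0, a ∈ A}`. -/
def coneGen {X : Type*} [AddCommGroup X] [Module ℝ X] (A : Set X) : Set X :=
  {y | ∃ t : ℝ, 0 ≤ t ∧ ∃ a ∈ A, y = t • a}

/-- A set is a linear subspace if it is the carrier of a submodule. -/
def IsLinSubspace {X : Type*} [AddCommGroup X] [Module ℝ X] (s : Set X) : Prop :=
  ∃ L : Submodule ℝ X, (L : Set X) = s

/-- Intrinsic relative interior. -/
def iri {X : Type*} [AddCommGroup X] [Module ℝ X] (Ω : Set X) : Set X :=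
  {x ∈ Ω | IsLinSubspace (coneGen ((fun y => y - x) '' Ω))}

/-- Quasi-relative interior. -/
def qri {X : Type*} [AddCommGroup X] [Module ℝ X] [TopologicalSpace X] (Ω : Set X) : Set X :=
  {x ∈ Ω | IsLinSubspace (closure (coneGen ((fun y => y - x) '' Ω)))}

/-- Relative interior in a topological vector space. -/
def ri {X : Type*} [AddCommGroup X] [Module ℝ X] [TopologicalSpace X] (Ω : Set X) : Set X :=
  {x ∈ Ω | ∃ V ∈ nhds x, V ∩ closure ((affineSpan ℝ Ω : Set X)) ⊆ Ω}

/-- Normal cone (functional-analytic version), a subset of the topological dual. -/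
def normalCone {X : Type*} [AddCommGroup X] [Module ℝ X] [TopologicalSpace X]
    (Ω : Set X) (xb : X) : Set (X →L[ℝ] ℝ) :=
  {f | ∀ x ∈ Ω, f (x - xb) ≤ 0}

lemma mem_openSegment_iff_exists_pos_smul {𝕜 E : Type*} [Field 𝕜] [LinearOrder 𝕜]
    [IsStrictOrderedRing 𝕜] [AddCommGroup E] [Module 𝕜 E] {x y z : E} :
    z ∈ openSegment 𝕜 x y ↔ ∃ t : 𝕜, 0 < t ∧ z - x = t • (y - z) := by
  rw [mem_openSegment_iff_div]
  constructor
  · rintro ⟨a, b, ha, hb, rfl⟩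
    refine ⟨b / a, div_pos hb ha, ?_⟩
    have hab : a + b ≠ 0 := by positivity
    match_scalars <;> field_simp <;> ring
  · rintro ⟨t, ht, h⟩
    refine ⟨1, t, one_pos, ht, ?_⟩
    have h1t : 1 + t ≠ 0 := by positivity
    have hz : (1 + t) • z = x + t • y := by
      linear_combination (norm := module) h
    linear_combination (norm := match_scalars <;> field_simp <;> ring) (-(1 / (1 + t))) • hz

section ConeGen

variable {X : Type*} [AddCommGroup X] [Module ℝ X] {s : Set X}

lemma smul_mem_coneGen {t : ℝ} {y : X} (ht : 0 ≤ t) (hy : y ∈ coneGen s) :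
    t • y ∈ coneGen s := by
  obtain ⟨c, hc, a, ha, rfl⟩ := hy
  exact ⟨t * c, mul_nonneg ht hc, a, ha, smul_smul t c a⟩

lemma subset_coneGen : s ⊆ coneGen s :=
  fun a ha => ⟨1, zero_le_one, a, ha, (one_smul ℝ a).symm⟩

lemma coe_convexConeHull_eq_coneGen (hs : Convex ℝ s) (h0 : (0 : X) ∈ s) :
    (ConvexCone.hull ℝ s : Set X) = coneGen s := by
  ext y
  rw [SetLike.mem_coe, ConvexCone.mem_hull_of_convex hs]
  constructor
  · rintro ⟨r, hr, a, ha, rfl⟩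
    exact ⟨r, hr.le, a, ha, rfl⟩
  · rintro ⟨t, ht, a, ha, rfl⟩
    rcases ht.eq_or_lt with rfl | ht
    · exact ⟨1, one_pos, 0, h0, by simp⟩
    · exact ⟨t, ht, a, ha, rfl⟩

lemma PointedCone.isLinSubspace_iff (C : PointedCone ℝ X) :
    IsLinSubspace (C : Set X) ↔ ∀ y ∈ C, -y ∈ C := by
  constructor
  · rintro ⟨L, hL⟩ y hy
    rw [← SetLike.mem_coe, ← hL] at hy ⊢
    exact L.neg_mem hy
  · intro hneg
    exact ⟨C.lineal, Set.ext fun y => ⟨fun hy => (PointedCone.mem_lineal.1 hy).1,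
      fun hy => PointedCone.mem_lineal.2 ⟨hy, hneg y hy⟩⟩⟩

lemma isLinSubspace_coneGen_iff (hs : Convex ℝ s) (h0 : (0 : X) ∈ s) :
    IsLinSubspace (coneGen s) ↔ ∀ a ∈ s, -a ∈ coneGen s := by
  let C := (ConvexCone.hull ℝ s).toPointedCone (ConvexCone.subset_hull h0)
  have hC : (C : Set X) = coneGen s := coe_convexConeHull_eq_coneGen hs h0
  rw [← hC, C.isLinSubspace_iff]
  simp only [← SetLike.mem_coe, hC]
  refine ⟨fun hneg a ha => hneg a (subset_coneGen ha), ?_⟩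
  rintro hneg _ ⟨t, ht, a, ha, rfl⟩
  rw [← smul_neg]
  exact smul_mem_coneGen ht (hneg a ha)

lemma sub_mem_coneGen_image_sub_iff {Ω : Set X} {x xb : X} (hx : x ≠ xb) :
    xb - x ∈ coneGen ((fun y => y - xb) '' Ω) ↔ ∃ u ∈ Ω, xb ∈ openSegment ℝ x u := by
  simp only [mem_openSegment_iff_exists_pos_smul]
  constructor
  · rintro ⟨t, ht, _, ⟨u, hu, rfl⟩, h⟩
    have ht_pos : 0 < t := ht.lt_of_ne <| by
      rintro rfl
      exact hx (sub_eq_zero.1 (by simpa using h)).symm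
    exact ⟨u, hu, t, ht_pos, h⟩
  · rintro ⟨u, hu, t, ht, h⟩
    exact ⟨t, ht.le, u - xb, ⟨u, hu, rfl⟩, h⟩

end ConeGen

theorem iri_iff_relatively_absorbing_general {X : Type*} [AddCommGroup X] [Module ℝ X]
    (Ω : Set X) (hconv : Convex ℝ Ω) (xb : X) (hxb : xb ∈ Ω) :
    xb ∈ iri Ω ↔ ∀ x ∈ Ω, x ≠ xb → ∃ u ∈ Ω, xb ∈ openSegment ℝ x u := by
  have h0 : (0 : X) ∈ (fun y => y - xb) '' Ω := ⟨xb, hxb, sub_self xb⟩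
  have hconv_sub : Convex ℝ ((fun y => y - xb) '' Ω) := by
    simpa only [sub_eq_neg_add] using hconv.translate (-xb)
  simp only [iri, mem_ofPred_eq, hxb, true_and, isLinSubspace_coneGen_iff hconv_sub h0,
    forall_mem_image, neg_sub]
  refine forall₂_congr fun x _ => ?_
  by_cases hx : x = xb
  · subst hx
    simpa using subset_coneGen h0
  · simp [hx, sub_mem_coneGen_image_sub_iff hx]

/-- `xb ∈ iri Ω` iff `xb` is a relatively absorbing point of `Ω`. -/
theorem iri_iff_relatively_absorbing {X : Type*} [AddCommGroup X] [Module ℝ X]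
    [TopologicalSpace X] [IsTopologicalAddGroup X] [ContinuousSMul ℝ X]
    (Ω : Set X) (hne : Ω.Nonempty) (hconv : Convex ℝ Ω) (xb : X) (hxb : xb ∈ Ω) :
    xb ∈ iri Ω ↔ ∀ x ∈ Ω, x ≠ xb → ∃ u ∈ Ω, xb ∈ openSegment ℝ x u :=
  iri_iff_relatively_absorbing_general Ω hconv xb hxb
end

section
/- Let Ω be a convex set in a locally convex topological vector space X, and let x̄ ∈ Ω. Then the sets Ω and {x̄} are properly separated if and only if x̄ ∉ qri(Ω). -/
open Set Pointwise Filter Topology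

/-- Two sets are properly separated if some continuous linear functional separates them,
and is not constant simultaneously on both. -/
def ProperlySeparated {X : Type*} [AddCommGroup X] [Module ℝ X] [TopologicalSpace X]
    (Ω₁ Ω₂ : Set X) : Prop :=
  ∃ f : X →L[ℝ] ℝ, (∀ x ∈ Ω₁, ∀ y ∈ Ω₂, f x ≤ f y) ∧
    (∃ x₀ ∈ Ω₁, ∃ y₀ ∈ Ω₂, f x₀ < f y₀)

/-! Put `A = Ω - x̄` and `K = cl cone A`; since `A` is convex and contains `0`, `K` is a closed
convex cone, and a cone is a linear subspace exactly when it is symmetric. A functional that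
properly separates `Ω` from `x̄` is `≤ 0` on `A`, hence on `K`, and negative at some `a ∈ A`;
then `-a ∉ K`. Conversely, if `v ∈ K` but `-v ∉ K`, Farkas' lemma gives `f ≥ 0` on `K` with
`f (-v) < 0`, and `-f` properly separates: were it to vanish on `A`, it would vanish on `K`. -/

section
variable {X : Type*} [AddCommGroup X] [Module ℝ X]

lemma coneGen_eq_hull {A : Set X} (hA : Convex ℝ A) (h0 : (0 : X) ∈ A) :
    coneGen A = ConvexCone.hull ℝ A := by
  ext y
  rw [SetLike.mem_coe, ConvexCone.mem_hull_of_convex hA]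
  constructor
  · rintro ⟨t, ht, a, ha, rfl⟩
    rcases ht.eq_or_lt with rfl | ht
    · exact ⟨1, one_pos, by simpa using h0⟩
    · exact ⟨t, ht, Set.smul_mem_smul_set ha⟩
  · rintro ⟨c, hc, a, ha, rfl⟩
    exact ⟨c, hc.le, a, ha, rfl⟩

lemma PointedCone.isLinSubspace_coe_iff {C : PointedCone ℝ X} :
    IsLinSubspace (C : Set X) ↔ ∀ x ∈ C, -x ∈ C := by
  refine ⟨?_, fun h => ⟨C.lineal, Set.ext fun x => ⟨fun hx => (PointedCone.mem_lineal.1 hx).1,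
    fun hx => PointedCone.mem_lineal.2 ⟨hx, h x hx⟩⟩⟩⟩
  rintro ⟨L, hL⟩ x hx
  rw [← SetLike.mem_coe, ← hL] at hx ⊢
  exact L.neg_mem hx

lemma map_nonpos_of_mem_closure_coneGen [TopologicalSpace X] {f : X →L[ℝ] ℝ} {A : Set X}
    (hf : ∀ a ∈ A, f a ≤ 0) {y : X} (hy : y ∈ closure (coneGen A)) : f y ≤ 0 := by
  refine closure_minimal ?_ (isClosed_le f.continuous continuous_const) hy
  rintro _ ⟨t, ht, a, ha, rfl⟩
  simpa using mul_nonpos_of_nonneg_of_nonpos ht (hf a ha)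

lemma properlySeparated_singleton_iff [TopologicalSpace X] {Ω : Set X} {xb : X} :
    ProperlySeparated Ω {xb} ↔
      ∃ f : X →L[ℝ] ℝ, (∀ a ∈ (· - xb) '' Ω, f a ≤ 0) ∧ ∃ a ∈ (· - xb) '' Ω, f a < 0 := by
  simp [ProperlySeparated, map_sub]

variable [TopologicalSpace X] [IsTopologicalAddGroup X] [ContinuousSMul ℝ X]

theorem exists_nonpos_lt_iff_not_isLinSubspace [LocallyConvexSpace ℝ X] {A : Set X}
    (hA : Convex ℝ A) (h0 : (0 : X) ∈ A) :
    (∃ f : X →L[ℝ] ℝ, (∀ a ∈ A, f a ≤ 0) ∧ ∃ a ∈ A, f a < 0) ↔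
      ¬ IsLinSubspace (closure (coneGen A)) := by
  let K : ProperCone ℝ X :=
    Submodule.closure ((ConvexCone.hull ℝ A).toPointedCone (ConvexCone.subset_hull h0))
  have hK : ((K : PointedCone ℝ X) : Set X) = closure (coneGen A) := by
    rw [coneGen_eq_hull hA h0]; rfl
  have hAK : A ⊆ K := hK ▸ subset_closure.trans' fun a ha =>
    ⟨1, zero_le_one, a, ha, (one_smul ℝ a).symm⟩
  rw [← hK, PointedCone.isLinSubspace_coe_iff (C := K.toPointedCone)]
  push Not
  constructor
  · rintro ⟨f, hf, a, ha, hfa⟩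
    refine ⟨a, hAK ha, fun hna => ?_⟩
    have hf_neg := map_nonpos_of_mem_closure_coneGen hf (hK.subset hna)
    rw [map_neg] at hf_neg
    linarith
  · rintro ⟨v, hv, hnv⟩
    obtain ⟨f, hfK, hfv⟩ := K.hyperplane_separation_point hnv
    refine ⟨-f, fun a ha => by simpa using hfK a (hAK ha), ?_⟩
    by_contra! hfA
    have hfv_nonpos : f v ≤ 0 :=
      map_nonpos_of_mem_closure_coneGen (fun a ha => by simpa using hfA a ha) (hK.subset hv)
    rw [map_neg] at hfv
    linarith

end

/-- `Ω` and `{xb}` are properly separated iff `xb ∉ qri Ω`. -/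
theorem properlySeparated_singleton_iff_not_qri {X : Type*} [AddCommGroup X] [Module ℝ X]
    [TopologicalSpace X] [IsTopologicalAddGroup X] [ContinuousSMul ℝ X]
    [LocallyConvexSpace ℝ X]
    (Ω : Set X) (hconv : Convex ℝ Ω) (xb : X) (hxb : xb ∈ Ω) :
    ProperlySeparated Ω {xb} ↔ xb ∉ qri Ω := by
  have hA : Convex ℝ ((· - xb) '' Ω) := by simpa [sub_eq_neg_add] using hconv.translate (-xb)
  rw [properlySeparated_singleton_iff,
    exists_nonpos_lt_iff_not_isLinSubspace hA ⟨xb, hxb, sub_self xb⟩]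
  simp [qri, hxb]
end

section
/- Let Ω be a convex subset of a topological vector space X. Then ri(Ω) ⊆ iri(Ω) ⊆ qri(Ω). If moreover X is locally convex and ri(Ω) ≠ ∅, then ri(Ω) = iri(Ω) = qri(Ω). -/
open Set Pointwise Filter Topology

/-!
The cone generated by `Ω - x` always lies in the direction `D` of the affine hull of `Ω`, and it
is all of `D` when `x ∈ ri Ω`, because then `x + t • y ∈ Ω` for every `y ∈ D` and small `t > 0`.
For the converse, let `x₀ ∈ ri Ω` and `x ∈ qri Ω`. Since the closed cone is a subspace containing
`x₀ - x`, it contains `x - x₀`, so some `t • (ω - x)` with `ω ∈ Ω`, `t ≥ 0` is close to `x - x₀`.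
The point `p = x - t • (ω - x)` of the affine hull is then close to `x₀`, hence in `ri Ω`, and `x`
lies on the half-open segment from `ω` to `p`, which stays in `ri Ω` by convexity.
-/

section Homothety

variable {k E : Type*} [CommRing k] [AddCommGroup E] [Module k E] [TopologicalSpace E]
  [IsTopologicalAddGroup E] [ContinuousConstSMul k E]

theorem AffineSubspace.homothety_mem_closure {s : AffineSubspace k E} {c p : E} (hc : c ∈ s)
    (hp : p ∈ closure (s : Set E)) (r : k) : AffineMap.homothety c r p ∈ closure (s : Set E) :=
  map_mem_closure (AffineMap.homothety_continuous c r) hp fun _ hq ↦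
    AffineMap.homothety_mem hc r hq

end Homothety

section RelativeInteriors

variable {X : Type*} [AddCommGroup X] [Module ℝ X]

theorem subset_coneGen_s6 (A : Set X) : A ⊆ coneGen A :=
  fun a ha ↦ ⟨1, zero_le_one, a, ha, (one_smul ℝ a).symm⟩

theorem coneGen_subset {A : Set X} {L : Submodule ℝ X} (h : A ⊆ L) : coneGen A ⊆ L := by
  rintro _ ⟨t, -, a, ha, rfl⟩
  exact L.smul_mem t (h ha)

theorem coneGen_sub_subset_direction {Ω : Set X} {x : X} (hx : x ∈ Ω) :
    coneGen ((· - x) '' Ω) ⊆ (affineSpan ℝ Ω).direction :=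
  coneGen_subset <| image_subset_iff.mpr fun _ hy ↦
    AffineSubspace.vsub_mem_direction (subset_affineSpan ℝ Ω hy) (subset_affineSpan ℝ Ω hx)

variable [TopologicalSpace X] {Ω : Set X}

theorem exists_mem_nhds_inter_subset_ri {x : X} (hx : x ∈ ri Ω) :
    ∃ U ∈ 𝓝 x, U ∩ closure (affineSpan ℝ Ω : Set X) ⊆ ri Ω := by
  obtain ⟨-, V, hV, hVΩ⟩ := hx
  obtain ⟨U, hUV, hU, hxU⟩ := mem_nhds_iff.mp hV
  have hUΩ : U ∩ closure (affineSpan ℝ Ω : Set X) ⊆ Ω := fun q hq ↦ hVΩ ⟨hUV hq.1, hq.2⟩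
  exact ⟨U, hU.mem_nhds hxU, fun q hq ↦ ⟨hUΩ hq, U, hU.mem_nhds hq.1, hUΩ⟩⟩

theorem iri_subset_qri [IsTopologicalAddGroup X] [ContinuousConstSMul ℝ X] :
    iri Ω ⊆ qri Ω := by
  rintro x ⟨hx, L, hL⟩
  exact ⟨hx, L.topologicalClosure, by rw [Submodule.topologicalClosure_coe, hL]⟩

variable [IsTopologicalAddGroup X] [ContinuousSMul ℝ X]

theorem exists_pos_add_smul_mem_of_mem_ri {x y : X} (hx : x ∈ ri Ω)
    (hy : y ∈ (affineSpan ℝ Ω).direction) : ∃ t : ℝ, 0 < t ∧ x + t • y ∈ Ω := by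
  obtain ⟨hxΩ, V, hV, hVΩ⟩ := hx
  have hline : Tendsto (fun t : ℝ ↦ x + t • y) (𝓝[>] 0) (𝓝 x) :=
    ((continuous_const.add (continuous_id.smul continuous_const)).tendsto' 0 x
      (by simp)).mono_left nhdsWithin_le_nhds
  obtain ⟨t, htV, ht⟩ := ((hline.eventually hV).and self_mem_nhdsWithin).exists
  have hA : x + t • y ∈ affineSpan ℝ Ω := by
    rw [add_comm]
    exact AffineSubspace.vadd_mem_of_mem_direction (Submodule.smul_mem _ t hy)
      (subset_affineSpan ℝ Ω hxΩ)
  exact ⟨t, ht, hVΩ ⟨htV, subset_closure hA⟩⟩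

theorem ri_subset_iri : ri Ω ⊆ iri Ω := by
  intro x hx
  refine ⟨hx.1, (affineSpan ℝ Ω).direction, subset_antisymm (fun y hy ↦ ?_)
    (coneGen_sub_subset_direction hx.1)⟩
  obtain ⟨t, ht, hty⟩ := exists_pos_add_smul_mem_of_mem_ri hx hy
  refine ⟨t⁻¹, inv_nonneg.mpr ht.le, _, ⟨_, hty, rfl⟩, ?_⟩
  beta_reduce
  rw [add_sub_cancel_left, inv_smul_smul₀ ht.ne']

theorem homothety_mem_ri (hΩ : Convex ℝ Ω) {ω p : X} (hω : ω ∈ Ω) (hp : p ∈ ri Ω) {c : ℝ}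
    (hc₀ : 0 < c) (hc₁ : c ≤ 1) : AffineMap.homothety ω c p ∈ ri Ω := by
  obtain ⟨hpΩ, V, hV, hVΩ⟩ := hp
  have hωA : ω ∈ affineSpan ℝ Ω := subset_affineSpan ℝ Ω hω
  refine ⟨?_, AffineMap.homothety ω c '' V,
    (AffineMap.homothety_isOpenMap ω c hc₀.ne').image_mem_nhds hV, ?_⟩
  · rw [AffineMap.homothety_eq_lineMap]
    exact hΩ.lineMap_mem hω hpΩ ⟨hc₀.le, hc₁⟩
  rintro _ ⟨⟨v, hvV, rfl⟩, hvA⟩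
  have hv : AffineMap.homothety ω c⁻¹ (AffineMap.homothety ω c v) = v := by
    rw [← AffineMap.homothety_mul_apply, inv_mul_cancel₀ hc₀.ne', AffineMap.homothety_one,
      AffineMap.id_apply]
  have hvΩ : v ∈ Ω := hVΩ ⟨hvV, hv ▸ AffineSubspace.homothety_mem_closure hωA hvA c⁻¹⟩
  rw [AffineMap.homothety_eq_lineMap]
  exact hΩ.lineMap_mem hω hvΩ ⟨hc₀.le, hc₁⟩

theorem mem_ri_of_sub_mem_closure_coneGen (hΩ : Convex ℝ Ω) {x₀ x : X} (hx₀ : x₀ ∈ ri Ω)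
    (hx : x ∈ Ω) (h : x - x₀ ∈ closure (coneGen ((· - x) '' Ω))) : x ∈ ri Ω := by
  obtain ⟨U, hU, hUri⟩ := exists_mem_nhds_inter_subset_ri hx₀
  have hU' : (x - ·) ⁻¹' U ∈ 𝓝 (x - x₀) :=
    (continuous_const.sub continuous_id).continuousAt.preimage_mem_nhds (by simpa using hU)
  obtain ⟨_, hpU, t, ht, _, ⟨ω, hω, rfl⟩, rfl⟩ := mem_closure_iff_nhds.mp h _ hU'
  have hp : AffineMap.homothety x (-t) ω ∈ ri Ω := by
    refine hUri ⟨?_, subset_closure ?_⟩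
    · simpa [AffineMap.homothety_apply, sub_eq_add_neg, add_comm] using hpU
    · exact AffineMap.homothety_mem (subset_affineSpan ℝ Ω hx) _ (subset_affineSpan ℝ Ω hω)
  have hx_eq : x = AffineMap.homothety ω (1 + t)⁻¹ (AffineMap.homothety x (-t) ω) := by
    simp only [AffineMap.homothety_apply, vsub_eq_sub, vadd_eq_add]
    match_scalars <;> field_simp <;> ring
  rw [hx_eq]
  exact homothety_mem_ri hΩ hω hp (by positivity) (inv_le_one_of_one_le₀ (by linarith))

theorem qri_subset_ri (hΩ : Convex ℝ Ω) (hri : (ri Ω).Nonempty) : qri Ω ⊆ ri Ω := by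
  obtain ⟨x₀, hx₀⟩ := hri
  rintro x ⟨hx, L, hL⟩
  refine mem_ri_of_sub_mem_closure_coneGen hΩ hx₀ hx ?_
  have hL₀ : x₀ - x ∈ L := by
    rw [← SetLike.mem_coe, hL]
    exact subset_closure (subset_coneGen_s6 _ ⟨x₀, hx₀.1, rfl⟩)
  rw [← hL, ← neg_sub]
  exact L.neg_mem hL₀

end RelativeInteriors

/-- `ri Ω ⊆ iri Ω ⊆ qri Ω`, with equalities when `X` is locally convex
and `ri Ω ≠ ∅`. -/
theorem ri_subset_iri_subset_qri {X : Type*} [AddCommGroup X] [Module ℝ X]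
    [TopologicalSpace X] [IsTopologicalAddGroup X] [ContinuousSMul ℝ X]
    (Ω : Set X) (hconv : Convex ℝ Ω) :
    ri Ω ⊆ iri Ω ∧ iri Ω ⊆ qri Ω ∧
      (LocallyConvexSpace ℝ X → (ri Ω).Nonempty →
        ri Ω = iri Ω ∧ iri Ω = qri Ω) := by
  refine ⟨ri_subset_iri, iri_subset_qri, fun _ hri ↦ ?_⟩
  have hqri : qri Ω ⊆ ri Ω := qri_subset_ri hconv hri
  exact ⟨ri_subset_iri.antisymm (iri_subset_qri.trans hqri),
    iri_subset_qri.antisymm (hqri.trans ri_subset_iri)⟩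
end

section
/- Let X be a locally convex topological vector space and let Ω ⊆ X be a nonempty, closed, convex set with 0 ∈ Ω \ iri(Ω). If iri(Ω) ≠ ∅, then cl(aff Ω) is a closed linear subspace of X and there exists a sequence (x_k) with x_k ∈ −Ω, x_k ∉ Ω for every k, and x_k → 0 as k → ∞. -/
/-!
As `0 ∈ Ω`, the affine hull of `Ω` is its linear span, whose closure is a closed subspace.
For the sequence take `x̄ ∈ iri Ω` and `x_k = -x̄ / (k + 1)`; by convexity `x_k ∈ -Ω`. If some
`-t x̄` (`t > 0`) lay in `Ω`, then `-x̄ ∈ cone Ω`; since `cone (Ω - x̄)` is a subspace, every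
`a - x̄` can be reversed, `x̄ - a = s (z - x̄)` with `z ∈ Ω`, so `-a = s z + (1 + s)(-x̄) ∈ cone Ω`
for every `a ∈ Ω`. The convex cone `cone Ω` would then be a subspace, i.e. `0 ∈ iri Ω`.
-/

open Set Pointwise Filter Topology

section Cone

variable {X : Type*} [AddCommGroup X] [Module ℝ X]

theorem smul_mem_coneGen_s13 {A : Set X} {t : ℝ} {a : X} (ht : 0 ≤ t) (ha : a ∈ A) :
    t • a ∈ coneGen A :=
  ⟨t, ht, a, ha, rfl⟩

theorem coneGen_smul_mem {A : Set X} {c : ℝ} {v : X} (hc : 0 ≤ c) (hv : v ∈ coneGen A) :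
    c • v ∈ coneGen A := by
  obtain ⟨t, ht, a, ha, rfl⟩ := hv
  exact ⟨c * t, mul_nonneg hc ht, a, ha, (mul_smul c t a).symm⟩

theorem Convex.coneGen_add_mem {Ω : Set X} (hconv : Convex ℝ Ω) {v w : X}
    (hv : v ∈ coneGen Ω) (hw : w ∈ coneGen Ω) : v + w ∈ coneGen Ω := by
  obtain ⟨s, hs, z, hz, rfl⟩ := hv
  obtain ⟨r, hr, u, hu, rfl⟩ := hw
  rcases (add_nonneg hs hr).eq_or_lt with hsr | hsr
  · obtain rfl : s = 0 := by linarith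
    obtain rfl : r = 0 := by linarith
    simpa using smul_mem_coneGen_s13 le_rfl hz
  · refine ⟨s + r, hsr.le, (s / (s + r)) • z + (r / (s + r)) • u,
      hconv hz hu (div_nonneg hs hsr.le) (div_nonneg hr hsr.le) (by field_simp), ?_⟩
    rw [smul_add, smul_smul, smul_smul, mul_div_cancel₀ _ hsr.ne', mul_div_cancel₀ _ hsr.ne']

theorem Convex.isLinSubspace_coneGen {Ω : Set X} (hconv : Convex ℝ Ω) (hne : Ω.Nonempty)
    (hneg : ∀ a ∈ Ω, -a ∈ coneGen Ω) : IsLinSubspace (coneGen Ω) := by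
  refine ⟨{ carrier := coneGen Ω
            add_mem' := hconv.coneGen_add_mem
            zero_mem' := by simpa using smul_mem_coneGen_s13 le_rfl hne.some_mem
            smul_mem' := ?_ }, rfl⟩
  intro c v hv
  rcases le_or_gt 0 c with hc | hc
  · exact coneGen_smul_mem hc hv
  · obtain ⟨t, ht, a, ha, rfl⟩ := hv
    rw [show c • t • a = (-c * t) • -a by module]
    exact coneGen_smul_mem (mul_nonneg (by linarith) ht) (hneg a ha)

theorem exists_smul_sub_eq_of_mem_iri {Ω : Set X} {x a : X} (hx : x ∈ iri Ω) (ha : a ∈ Ω) :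
    ∃ s : ℝ, 0 ≤ s ∧ ∃ z ∈ Ω, x - a = s • (z - x) := by
  obtain ⟨-, L, hL⟩ := hx
  have hax : a - x ∈ (L : Set X) := by
    rw [hL, ← one_smul ℝ (a - x)]
    exact smul_mem_coneGen_s13 zero_le_one ⟨a, ha, rfl⟩
  have hxa : -(a - x) ∈ (L : Set X) := L.neg_mem hax
  rw [hL] at hxa
  obtain ⟨s, hs, _, ⟨z, hz, rfl⟩, heq⟩ := hxa
  exact ⟨s, hs, z, hz, by rw [← heq, neg_sub]⟩

theorem zero_mem_iri_of_neg_smul_mem {Ω : Set X} (hconv : Convex ℝ Ω) (h0 : (0 : X) ∈ Ω)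
    {x : X} (hx : x ∈ iri Ω) {t : ℝ} (ht : 0 < t) (hxt : (-t) • x ∈ Ω) : (0 : X) ∈ iri Ω := by
  have hnegx : -x ∈ coneGen Ω := by
    rw [show -x = t⁻¹ • (-t) • x by rw [smul_smul]; field_simp; rw [neg_one_smul]]
    exact smul_mem_coneGen_s13 (inv_nonneg.2 ht.le) hxt
  have hneg : ∀ a ∈ Ω, -a ∈ coneGen Ω := by
    intro a ha
    obtain ⟨s, hs, z, hz, hxa⟩ := exists_smul_sub_eq_of_mem_iri hx ha
    rw [show -a = s • z + (1 + s) • -x by linear_combination (norm := module) hxa]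
    exact hconv.coneGen_add_mem (smul_mem_coneGen_s13 hs hz) (coneGen_smul_mem (by linarith) hnegx)
  refine ⟨h0, ?_⟩
  simpa using hconv.isLinSubspace_coneGen ⟨0, h0⟩ hneg

end Cone

theorem isLinSubspace_closure_affineSpan_of_zero_mem {X : Type*} [AddCommGroup X] [Module ℝ X]
    [TopologicalSpace X] [ContinuousAdd X] [ContinuousConstSMul ℝ X] {Ω : Set X}
    (h0 : (0 : X) ∈ Ω) : IsLinSubspace (closure (affineSpan ℝ Ω : Set X)) := by
  have hspan : (affineSpan ℝ Ω : Set X) = Submodule.span ℝ Ω := by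
    rw [← affineSpan_insert_zero, insert_eq_of_mem h0]
  exact ⟨(Submodule.span ℝ Ω).topologicalClosure, by rw [hspan]; rfl⟩

theorem claff_subspace_and_sequence_general {X : Type*} [AddCommGroup X] [Module ℝ X]
    [TopologicalSpace X] [IsTopologicalAddGroup X] [ContinuousSMul ℝ X]
    (Ω : Set X) (hconv : Convex ℝ Ω)
    (h0 : (0 : X) ∈ Ω \ iri Ω) (hiri : (iri Ω).Nonempty) :
    (IsLinSubspace (closure ((affineSpan ℝ Ω : Set X))) ∧
      IsClosed (closure ((affineSpan ℝ Ω : Set X)))) ∧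
    ∃ x : ℕ → X, (∀ k, x k ∈ -Ω ∧ x k ∉ Ω) ∧ Filter.Tendsto x Filter.atTop (nhds 0) := by
  obtain ⟨h0Ω, h0iri⟩ := h0
  obtain ⟨xb, hxb⟩ := hiri
  refine ⟨⟨isLinSubspace_closure_affineSpan_of_zero_mem h0Ω, isClosed_closure⟩,
    fun k => (-(1 / (k + 1 : ℝ))) • xb, fun k => ⟨?_, ?_⟩, ?_⟩
  · have hk : 1 / (k + 1 : ℝ) ∈ Icc (0 : ℝ) 1 :=
      ⟨by positivity, (div_le_one (by positivity)).2 (by simp)⟩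
    simpa [neg_smul] using hconv.smul_mem_of_zero_mem h0Ω hxb.1 hk
  · exact fun hmem => h0iri (zero_mem_iri_of_neg_smul_mem hconv h0Ω hxb (by positivity) hmem)
  · simpa using (tendsto_one_div_add_atTop_nhds_zero_nat (𝕜 := ℝ)).neg.smul_const xb

/-- if `Ω` is a nonempty closed convex set in an LCTV space with
`0 ∈ Ω \ iri Ω` and `iri Ω ≠ ∅`, then `cl(aff Ω)` is a closed linear subspace and
there is a sequence in `−Ω`, outside of `Ω`, converging to `0`. -/
theorem claff_subspace_and_sequence {X : Type*} [AddCommGroup X] [Module ℝ X]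
    [TopologicalSpace X] [IsTopologicalAddGroup X] [ContinuousSMul ℝ X]
    [LocallyConvexSpace ℝ X]
    (Ω : Set X) (hne : Ω.Nonempty) (hcl : IsClosed Ω) (hconv : Convex ℝ Ω)
    (h0 : (0 : X) ∈ Ω \ iri Ω) (hiri : (iri Ω).Nonempty) :
    (IsLinSubspace (closure ((affineSpan ℝ Ω : Set X))) ∧
      IsClosed (closure ((affineSpan ℝ Ω : Set X)))) ∧
    ∃ x : ℕ → X, (∀ k, x k ∈ -Ω ∧ x k ∉ Ω) ∧ Filter.Tendsto x Filter.atTop (nhds 0) :=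
  claff_subspace_and_sequence_general Ω hconv h0 hiri
end
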